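/- Let U be an admissible configuration of size n ≥ 3 and let M be its largest entry. If the singleton {M−1} is not one of the chains of U, then the chain of U containing M has at least two entries, and the collection obtained from U by removing the entry M from that chain is an admissible configuration of size n−1. If the singleton {M−1} is one of the chains of U, then the collection obtained from U by deleting the chain {M−1} is an admissible configuration of size n−1. -/

import Mathlib

/-- The maximum entry of a finite set of integers (`0` for the empty set). -/
def fmax (C : Finset ℤ) : ℤ := C.max.unbotD 0

/-- The minimum entry of a finite set of integers (`0` for the empty set). -/
def fmin (C : Finset ℤ) : ℤ := C.min.untopD 0

/-- A *chain* is a nonempty set of integers of the form `{c, c-2, …, c-2k}`. -/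
def IsChainSet (C : Finset ℤ) : Prop :=
  ∃ (c : ℤ) (k : ℕ), C = (Finset.range (k + 1)).image (fun i : ℕ => c - 2 * (i : ℤ))

/-- Two chains with disjoint entries, with maxima `A, B` and minima `a, b`, are *linked*
if `A > B > a` or `B > A > b`. -/
def LinkedChains (C D : Finset ℤ) : Prop :=
  Disjoint C D ∧
    ((fmax D < fmax C ∧ fmin C < fmax D) ∨ (fmax C < fmax D ∧ fmin D < fmax C))

/-- The set of all entries of a collection of chains. -/
def entriesOf (S : Finset (Finset ℤ)) : Finset ℤ := S.biUnion id

/-- A finite collection of pairwise disjoint chains. -/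
def IsChainCollection (S : Finset (Finset ℤ)) : Prop :=
  (∀ C ∈ S, IsChainSet C) ∧ ∀ C ∈ S, ∀ D ∈ S, C ≠ D → Disjoint C D

/-- A collection of pairwise disjoint chains is *interlaced* if any two of its chains are
joined by a finite sequence of chains of the collection in which consecutive chains are
linked. -/
def Interlaced (S : Finset (Finset ℤ)) : Prop :=
  ∀ C ∈ S, ∀ D ∈ S,
    Relation.ReflTransGen (fun X Y => X ∈ S ∧ Y ∈ S ∧ LinkedChains X Y) C D

/-- An *admissible configuration of size `n`*: an interlaced collection of pairwise disjoint
chains of positive integers with `n` entries in total and smallest entry equal to `1`. -/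
def AdmissibleConfig (n : ℕ) (S : Finset (Finset ℤ)) : Prop :=
  IsChainCollection S ∧ Interlaced S ∧ (entriesOf S).card = n ∧
    (∀ x ∈ entriesOf S, 0 < x) ∧ (1 : ℤ) ∈ entriesOf S

/-!
Removing the largest entry `M` from its chain `C` lowers the top of `C` by `2` and keeps its
bottom. A chain `D` linked to `C` has top below `M`, and not at `M - 2 ∈ C`. If its top is at most
`M - 3`, it is still linked to the shortened chain as before; if its top is `M - 1`, then `D` is not
the singleton `{M - 1}`, so its bottom is at most `M - 3` and the link goes the other way. A
singleton `{M - 1}` can only be linked to the chain containing `M`, so deleting it leaves the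
collection interlaced. Since the `n ≥ 3` entries lie in `[1, M]`, `M ≥ 3` and the entry `1` is never
the one removed.
-/

open Finset

lemma fmax_eq_max' {C : Finset ℤ} (h : C.Nonempty) : fmax C = C.max' h := by
  simp [fmax, ← coe_max' h]

lemma fmin_eq_min' {C : Finset ℤ} (h : C.Nonempty) : fmin C = C.min' h := by
  simp [fmin, ← coe_min' h]

lemma fmax_mem {C : Finset ℤ} (h : C.Nonempty) : fmax C ∈ C :=
  fmax_eq_max' h ▸ max'_mem C h

lemma fmin_mem {C : Finset ℤ} (h : C.Nonempty) : fmin C ∈ C :=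
  fmin_eq_min' h ▸ min'_mem C h

lemma le_fmax {C : Finset ℤ} {x : ℤ} (h : x ∈ C) : x ≤ fmax C :=
  fmax_eq_max' ⟨x, h⟩ ▸ le_max' C x h

lemma fmin_le {C : Finset ℤ} {x : ℤ} (h : x ∈ C) : fmin C ≤ x :=
  fmin_eq_min' ⟨x, h⟩ ▸ min'_le C x h

lemma fmax_singleton (a : ℤ) : fmax {a} = a := by simp [fmax]

lemma fmin_singleton (a : ℤ) : fmin {a} = a := by simp [fmin]

lemma eq_singleton_fmax_of_card_lt_two {C : Finset ℤ} (hC : C.Nonempty) (h : #C < 2) :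
    C = {fmax C} := by
  obtain ⟨a, rfl⟩ := card_eq_one.1 (show #C = 1 by have := hC.card_pos; omega)
  rw [fmax_singleton]

section Chains

def chainOf (c : ℤ) (k : ℕ) : Finset ℤ :=
  (range (k + 1)).image fun i : ℕ => c - 2 * (i : ℤ)

variable {c x : ℤ} {k : ℕ}

lemma mem_chainOf : x ∈ chainOf c k ↔ ∃ i ≤ k, x = c - 2 * (i : ℤ) := by
  simp [chainOf, eq_comm]

lemma card_chainOf : #(chainOf c k) = k + 1 := by
  rw [chainOf, card_image_of_injective _ fun i j h => by simpa using h, card_range]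

lemma fmax_chainOf : fmax (chainOf c k) = c := by
  have hc : c ∈ chainOf c k := mem_chainOf.2 ⟨0, k.zero_le, by simp⟩
  obtain ⟨i, -, hi⟩ := mem_chainOf.1 (fmax_mem ⟨c, hc⟩)
  have := le_fmax hc
  omega

lemma fmin_chainOf : fmin (chainOf c k) = c - 2 * k := by
  have hc : c - 2 * k ∈ chainOf c k := mem_chainOf.2 ⟨k, le_rfl, rfl⟩
  obtain ⟨i, hik, hi⟩ := mem_chainOf.1 (fmin_mem ⟨_, hc⟩)
  have := fmin_le hc
  omega

lemma chainOf_succ_erase : (chainOf c (k + 1)).erase c = chainOf (c - 2) k := by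
  ext x
  simp only [mem_erase, mem_chainOf]
  constructor
  · rintro ⟨hxc, _ | j, hjk, rfl⟩
    · simp at hxc
    · exact ⟨j, by omega, by push_cast; ring⟩
  · rintro ⟨j, hjk, rfl⟩
    exact ⟨by omega, j + 1, by omega, by push_cast; ring⟩

lemma sub_two_mem_chainOf_succ : c - 2 ∈ chainOf c (k + 1) :=
  mem_chainOf.2 ⟨1, by omega, by simp⟩

end Chains

lemma isChainSet_iff {C : Finset ℤ} : IsChainSet C ↔ ∃ c k, C = chainOf c k := Iff.rfl

namespace IsChainSet

variable {C : Finset ℤ}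

lemma nonempty (hC : IsChainSet C) : C.Nonempty := by
  obtain ⟨c, k, rfl⟩ := isChainSet_iff.1 hC
  exact ⟨c, mem_chainOf.2 ⟨0, k.zero_le, by simp⟩⟩

lemma exists_eq_chainOf_succ (hC : IsChainSet C) (h2 : 2 ≤ #C) :
    ∃ c k, C = chainOf c (k + 1) := by
  obtain ⟨c, k, rfl⟩ := isChainSet_iff.1 hC
  obtain ⟨j, rfl⟩ := Nat.exists_eq_succ_of_ne_zero (show k ≠ 0 by rw [card_chainOf] at h2; omega)
  exact ⟨c, j, rfl⟩

lemma erase_fmax (hC : IsChainSet C) (h2 : 2 ≤ #C) : IsChainSet (C.erase (fmax C)) := by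
  obtain ⟨c, k, rfl⟩ := hC.exists_eq_chainOf_succ h2
  exact ⟨c - 2, k, by rw [fmax_chainOf, chainOf_succ_erase]; rfl⟩

lemma fmax_erase_fmax (hC : IsChainSet C) (h2 : 2 ≤ #C) :
    fmax (C.erase (fmax C)) = fmax C - 2 := by
  obtain ⟨c, k, rfl⟩ := hC.exists_eq_chainOf_succ h2
  rw [fmax_chainOf, chainOf_succ_erase, fmax_chainOf]

lemma fmin_erase_fmax (hC : IsChainSet C) (h2 : 2 ≤ #C) :
    fmin (C.erase (fmax C)) = fmin C := by
  obtain ⟨c, k, rfl⟩ := hC.exists_eq_chainOf_succ h2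
  rw [fmax_chainOf, chainOf_succ_erase, fmin_chainOf, fmin_chainOf]
  push_cast
  ring

lemma fmax_sub_two_mem (hC : IsChainSet C) (h2 : 2 ≤ #C) : fmax C - 2 ∈ C := by
  obtain ⟨c, k, rfl⟩ := hC.exists_eq_chainOf_succ h2
  rw [fmax_chainOf]
  exact sub_two_mem_chainOf_succ

end IsChainSet

section Linked

variable {C D : Finset ℤ}

lemma LinkedChains.symm (h : LinkedChains C D) : LinkedChains D C :=
  ⟨h.1.symm, h.2.symm⟩

lemma LinkedChains.irrefl : ¬ LinkedChains C C := fun h => by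
  rcases h.2 with h | h <;> exact lt_irrefl _ h.1

lemma LinkedChains.lt_fmax_of_singleton_left {a : ℤ} (h : LinkedChains {a} D) : a < fmax D := by
  have h2 := h.2
  rw [fmax_singleton, fmin_singleton] at h2
  omega

lemma LinkedChains.erase_fmax_left (h : LinkedChains C D) (hC : IsChainSet C) (hD : IsChainSet D)
    (hC2 : 2 ≤ #C) (hlt : fmax D < fmax C) (hne : D ≠ {fmax C - 1}) :
    LinkedChains (C.erase (fmax C)) D := by
  obtain ⟨hdisj, hor⟩ := h
  have hbot : fmin C < fmax D := by rcases hor with h | h <;> omega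
  have htop : fmax D ≠ fmax C - 2 := fun h =>
    disjoint_left.1 hdisj (hC.fmax_sub_two_mem hC2) (h ▸ fmax_mem hD.nonempty)
  refine ⟨disjoint_of_subset_left (erase_subset _ _) hdisj, ?_⟩
  rw [hC.fmax_erase_fmax hC2, hC.fmin_erase_fmax hC2]
  by_cases htop' : fmax D = fmax C - 1
  · have hD2 : 2 ≤ #D := by
      by_contra! hD1
      exact hne (htop' ▸ eq_singleton_fmax_of_card_lt_two hD.nonempty hD1)
    have := fmin_le (hD.fmax_sub_two_mem hD2)
    omega
  · omega

end Linked

section Collections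

variable {S : Finset (Finset ℤ)} {C D : Finset ℤ}

lemma mem_entriesOf {x : ℤ} : x ∈ entriesOf S ↔ ∃ C ∈ S, x ∈ C := by
  simp [entriesOf]

lemma fmax_le_fmax_entriesOf (hC : C ∈ S) (hne : C.Nonempty) : fmax C ≤ fmax (entriesOf S) :=
  le_fmax (mem_entriesOf.2 ⟨C, hC, fmax_mem hne⟩)

namespace IsChainCollection

lemma eq_of_mem (hS : IsChainCollection S) (hC : C ∈ S) (hD : D ∈ S) {x : ℤ} (hxC : x ∈ C)
    (hxD : x ∈ D) : C = D := by
  by_contra h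
  exact disjoint_left.1 (hS.2 C hC D hD h) hxC hxD

lemma mono {T : Finset (Finset ℤ)} (hS : IsChainCollection S) (h : T ⊆ S) :
    IsChainCollection T :=
  ⟨fun C hC => hS.1 C (h hC), fun C hC D hD => hS.2 C (h hC) D (h hD)⟩

lemma insert_erase {C' : Finset ℤ} (hS : IsChainCollection S) (hC : C ∈ S)
    (hC' : IsChainSet C') (hsub : C' ⊆ C) : IsChainCollection (insert C' (S.erase C)) := by
  refine ⟨fun X hX => ?_, fun X hX Y hY hXY => ?_⟩
  · rcases mem_insert.1 hX with rfl | hX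
    exacts [hC', hS.1 X (mem_erase.1 hX).2]
  simp only [mem_insert, mem_erase] at hX hY
  rcases hX with rfl | ⟨hXC, hX⟩ <;> rcases hY with rfl | ⟨hYC, hY⟩
  · exact absurd rfl hXY
  · exact disjoint_of_subset_left hsub (hS.2 C hC Y hY (Ne.symm hYC))
  · exact disjoint_of_subset_right hsub (hS.2 X hX C hC hXC)
  · exact hS.2 X hX Y hY hXY

lemma entriesOf_erase (hS : IsChainCollection S) (hC : C ∈ S) :
    entriesOf (S.erase C) = entriesOf S \ C := by
  ext x
  simp only [mem_entriesOf, mem_erase, mem_sdiff]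
  constructor
  · rintro ⟨D, ⟨hDC, hD⟩, hx⟩
    exact ⟨⟨D, hD, hx⟩, fun hxC => hDC (hS.eq_of_mem hD hC hx hxC)⟩
  · rintro ⟨⟨D, hD, hx⟩, hxC⟩
    exact ⟨D, ⟨by rintro rfl; exact hxC hx, hD⟩, hx⟩

lemma entriesOf_insert_erase (hS : IsChainCollection S) (hC : C ∈ S) {x : ℤ} (hx : x ∈ C) :
    entriesOf (insert (C.erase x) (S.erase C)) = (entriesOf S).erase x := by
  rw [entriesOf, biUnion_insert, ← entriesOf, hS.entriesOf_erase hC]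
  ext y
  simp only [id, mem_union, mem_erase, mem_sdiff]
  constructor
  · rintro (⟨hyx, hy⟩ | ⟨hy, hyC⟩)
    · exact ⟨hyx, mem_entriesOf.2 ⟨C, hC, hy⟩⟩
    · exact ⟨by rintro rfl; exact hyC hx, hy⟩
  · rintro ⟨hyx, hy⟩
    by_cases hyC : y ∈ C
    exacts [Or.inl ⟨hyx, hyC⟩, Or.inr ⟨hy, hyC⟩]

end IsChainCollection

namespace Interlaced

lemma of_map {T : Finset (Finset ℤ)} (hS : Interlaced S) (f : Finset ℤ → Finset ℤ)
    (hmaps : ∀ X ∈ S, f X ∈ T) (hsurj : ∀ Y ∈ T, ∃ X ∈ S, f X = Y)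
    (hlink : ∀ X ∈ S, ∀ Y ∈ S, LinkedChains X Y → f X = f Y ∨ LinkedChains (f X) (f Y)) :
    Interlaced T := by
  intro X' hX' Y' hY'
  obtain ⟨X, hX, rfl⟩ := hsurj X' hX'
  obtain ⟨Y, hY, rfl⟩ := hsurj Y' hY'
  refine Relation.ReflTransGen.lift' f (fun A B ⟨hA, hB, hAB⟩ => ?_) _ _ (hS X hX Y hY)
  rcases hlink A hA B hB hAB with h | h
  · show Relation.ReflTransGen _ (f A) (f B)
    rw [h]
  · exact .single ⟨hmaps A hA, hmaps B hB, h⟩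

lemma insert_erase {C' : Finset ℤ} (hS : Interlaced S) (hC : C ∈ S)
    (hlink : ∀ D ∈ S, D ≠ C → LinkedChains C D → LinkedChains C' D) :
    Interlaced (insert C' (S.erase C)) := by
  refine hS.of_map (fun Z => if Z = C then C' else Z) (fun X hX => ?_) (fun Y hY => ?_)
    (fun X hX Y hY hXY => Or.inr ?_)
  · split_ifs with hXC
    exacts [mem_insert_self _ _, mem_insert_of_mem (mem_erase.2 ⟨hXC, hX⟩)]
  · rcases mem_insert.1 hY with rfl | hY
    exacts [⟨C, hC, if_pos rfl⟩, ⟨Y, (mem_erase.1 hY).2, if_neg (mem_erase.1 hY).1⟩]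
  by_cases hXC : X = C <;> by_cases hYC : Y = C <;> simp only [hXC, hYC, if_true, if_false]
  · exact absurd (hXC ▸ hYC ▸ hXY) LinkedChains.irrefl
  · exact hlink Y hY hYC (hXC ▸ hXY)
  · exact (hlink X hX hXC (hYC ▸ hXY).symm).symm
  · exact hXY

lemma erase {T : Finset ℤ} (hS : Interlaced S) (hC : C ∈ S) (hCT : C ≠ T)
    (honly : ∀ D ∈ S, LinkedChains T D → D = C) : Interlaced (S.erase T) := by
  refine hS.of_map (fun Z => if Z = T then C else Z) (fun X hX => ?_) (fun Y hY => ?_)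
    (fun X hX Y hY hXY => ?_)
  · split_ifs with hXT
    exacts [mem_erase.2 ⟨hCT, hC⟩, mem_erase.2 ⟨hXT, hX⟩]
  · exact ⟨Y, (mem_erase.1 hY).2, if_neg (mem_erase.1 hY).1⟩
  by_cases hXT : X = T <;> by_cases hYT : Y = T <;> simp only [hXT, hYT, if_true, if_false]
  · exact absurd (hXT ▸ hYT ▸ hXY) LinkedChains.irrefl
  · exact Or.inl (honly Y hY (hXT ▸ hXY)).symm
  · exact Or.inl (honly X hX (hYT ▸ hXY).symm)
  · exact Or.inr hXY

lemma eq_singleton_of_forall_fmax_le {a : ℤ} (hS : Interlaced S) (ha : {a} ∈ S)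
    (hmax : ∀ Z ∈ S, fmax Z ≤ a) : S = {{a}} := by
  refine eq_singleton_iff_unique_mem.2 ⟨ha, fun D hD => ?_⟩
  rcases (hS _ ha D hD).cases_head with h | ⟨Z, ⟨-, hZ, hlink⟩, -⟩
  · exact h.symm
  · exact absurd (hmax Z hZ) (not_le.2 hlink.lt_fmax_of_singleton_left)

end Interlaced

namespace AdmissibleConfig

variable {n : ℕ}

lemma natCast_le_fmax_entriesOf (hS : AdmissibleConfig n S) : (n : ℤ) ≤ fmax (entriesOf S) := by
  have hsub : entriesOf S ⊆ Icc 1 (fmax (entriesOf S)) := fun x hx =>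
    mem_Icc.2 ⟨hS.2.2.2.1 x hx, le_fmax hx⟩
  have hle := card_le_card hsub
  have hpos := card_pos.2 ⟨1, hS.2.2.2.2⟩
  rw [hS.2.2.1, Int.card_Icc] at hle
  rw [hS.2.2.1] at hpos
  omega

lemma two_le_card_of_fmax_entriesOf_mem (hS : AdmissibleConfig n S) (hn : 2 ≤ n) (hC : C ∈ S)
    (hM : fmax (entriesOf S) ∈ C) : 2 ≤ #C := by
  by_contra! hC1
  have hfmax : ∀ Z ∈ S, fmax Z ≤ fmax (entriesOf S) := fun Z hZ =>
    fmax_le_fmax_entriesOf hZ (hS.1.1 Z hZ).nonempty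
  have hCs : C = {fmax (entriesOf S)} :=
    le_antisymm (hfmax C hC) (le_fmax hM) ▸ eq_singleton_fmax_of_card_lt_two ⟨_, hM⟩ hC1
  have hcard := hS.2.2.1
  rw [hS.2.1.eq_singleton_of_forall_fmax_le (hCs ▸ hC) hfmax, entriesOf, singleton_biUnion, id,
    card_singleton] at hcard
  omega

lemma of_entriesOf_eq_erase {T : Finset (Finset ℤ)} {x : ℤ} (hS : AdmissibleConfig n S)
    (hT : IsChainCollection T) (hTi : Interlaced T) (hx : x ∈ entriesOf S) (hx1 : x ≠ 1)
    (he : entriesOf T = (entriesOf S).erase x) : AdmissibleConfig (n - 1) T := by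
  obtain ⟨-, -, hcard, hpos, h1⟩ := hS
  refine ⟨hT, hTi, ?_, fun y hy => hpos y (mem_of_mem_erase (he ▸ hy)), he ▸ mem_erase.2 ⟨hx1.symm, h1⟩⟩
  rw [he, card_erase_of_mem hx, hcard]

end AdmissibleConfig

end Collections

/-- **Reduction step of Proposition 3.9.** Let `U` be an admissible configuration of size
`n ≥ 3` and `M` its largest entry.  If the singleton `{M-1}` is not a chain of `U`, then the
chain of `U` containing `M` has at least two entries and removing the entry `M` from it
yields an admissible configuration of size `n - 1`; if `{M-1}` is a chain of `U`, then
deleting this chain yields an admissible configuration of size `n - 1`. -/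
theorem reduction_step (n : ℕ) (hn : 3 ≤ n) (U : Finset (Finset ℤ))
    (hU : AdmissibleConfig n U) (M : ℤ) (hM : M = fmax (entriesOf U)) :
    (({M - 1} : Finset ℤ) ∉ U →
      ∀ C ∈ U, M ∈ C →
        2 ≤ C.card ∧ AdmissibleConfig (n - 1) (insert (C.erase M) (U.erase C))) ∧
    (({M - 1} : Finset ℤ) ∈ U →
      AdmissibleConfig (n - 1) (U.erase ({M - 1} : Finset ℤ))) := by
  obtain ⟨hcoll, hinter, -, -, h1⟩ := id hU
  have hMmem : M ∈ entriesOf U := hM ▸ fmax_mem ⟨1, h1⟩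
  have hM3 : 3 ≤ M := by have := hU.natCast_le_fmax_entriesOf; omega
  have hfmax : ∀ D ∈ U, fmax D ≤ M := fun D hD =>
    hM ▸ fmax_le_fmax_entriesOf hD (hcoll.1 D hD).nonempty
  refine ⟨fun hno C hC hMC => ?_, fun hT => ?_⟩
  · have hCM : fmax C = M := le_antisymm (hfmax C hC) (le_fmax hMC)
    have hC2 : 2 ≤ #C := hU.two_le_card_of_fmax_entriesOf_mem (by omega) hC (hM ▸ hMC)
    have hlink : ∀ D ∈ U, D ≠ C → LinkedChains C D → LinkedChains (C.erase M) D := by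
      intro D hD hDC hCD
      have hDM : fmax D ≠ M := fun h =>
        hDC (hcoll.eq_of_mem hD hC (h ▸ fmax_mem (hcoll.1 D hD).nonempty) hMC)
      rw [← hCM] at hno ⊢
      exact hCD.erase_fmax_left (hcoll.1 C hC) (hcoll.1 D hD) hC2
        (hCM ▸ (hfmax D hD).lt_of_ne hDM) (by rintro rfl; exact hno hD)
    exact ⟨hC2, hU.of_entriesOf_eq_erase
      (hcoll.insert_erase hC (hCM ▸ (hcoll.1 C hC).erase_fmax hC2) (erase_subset _ _))
      (hinter.insert_erase hC hlink) hMmem (by omega) (hcoll.entriesOf_insert_erase hC hMC)⟩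
  · obtain ⟨C, hC, hMC⟩ := mem_entriesOf.1 hMmem
    have hCT : C ≠ {M - 1} := by rintro rfl; exact absurd (mem_singleton.1 hMC) (by omega)
    have honly : ∀ D ∈ U, LinkedChains {M - 1} D → D = C := fun D hD hTD => by
      have hDM : fmax D = M := by have := hTD.lt_fmax_of_singleton_left; have := hfmax D hD; omega
      exact hcoll.eq_of_mem hD hC (hDM ▸ fmax_mem (hcoll.1 D hD).nonempty) hMC
    exact hU.of_entriesOf_eq_erase (hcoll.mono (erase_subset _ _)) (hinter.erase hC hCT honly)
      (mem_entriesOf.2 ⟨_, hT, mem_singleton_self _⟩) (by omega)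
      (by rw [hcoll.entriesOf_erase hT, sdiff_singleton_eq_erase])
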